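/- For any π ∈ S_n, the orbit of π under the dual Foata–Strehl action has cardinality |Orb_φ(π)| = 2^{n − v(π)}, where v(π) is the number of vales of π. -/

import Mathlib

/-- The extended one-line word of `w`, read 1-indexed, with the boundary
convention `π₀ = π_{n+1} = ∞`. -/
def ext (w : List ℕ) (i : ℕ) : ℕ∞ :=
  if 1 ≤ i ∧ i ≤ w.length then (w.getD (i - 1) 0 : ℕ∞) else ⊤

/-- The pinnacle set of the word `w`: values `π_i` with `π_{i-1} < π_i > π_{i+1}`. -/
def pinnSet (w : List ℕ) : Finset ℕ :=
  ((Finset.Icc 1 w.length).filter fun i =>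
      ext w (i - 1) < ext w i ∧ ext w (i + 1) < ext w i).image fun i => w.getD (i - 1) 0

/-- The vale set of the word `w`: values `π_i` with `π_{i-1} > π_i < π_{i+1}`. -/
def valeSet (w : List ℕ) : Finset ℕ :=
  ((Finset.Icc 1 w.length).filter fun i =>
      ext w i < ext w (i - 1) ∧ ext w i < ext w (i + 1)).image fun i => w.getD (i - 1) 0

/-- `w` is the one-line notation of a permutation of `[n] = {1, …, n}`. -/
def IsPermOf (n : ℕ) (w : List ℕ) : Prop := w.Perm (List.range' 1 n)

/-- `w₁` in the `x`-factorization `w = w₁ w₂ x w₄ w₅`. -/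
def fsW1 (x : ℕ) (w : List ℕ) : List ℕ :=
  ((w.take (w.idxOf x)).reverse.dropWhile fun a => decide (a < x)).reverse

/-- `w₂` in the `x`-factorization: the longest contiguous subword immediately to the
left of `x` all of whose letters are smaller than `x`. -/
def fsW2 (x : ℕ) (w : List ℕ) : List ℕ :=
  ((w.take (w.idxOf x)).reverse.takeWhile fun a => decide (a < x)).reverse

/-- `w₄` in the `x`-factorization: the longest contiguous subword immediately to the
right of `x` all of whose letters are smaller than `x`. -/
def fsW4 (x : ℕ) (w : List ℕ) : List ℕ :=
  (w.drop (w.idxOf x + 1)).takeWhile fun a => decide (a < x)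

/-- `w₅` in the `x`-factorization `w = w₁ w₂ x w₄ w₅`. -/
def fsW5 (x : ℕ) (w : List ℕ) : List ℕ :=
  (w.drop (w.idxOf x + 1)).dropWhile fun a => decide (a < x)

/-- The dual Foata–Strehl map `φ_x : w₁ w₂ x w₄ w₅ ↦ w₁ w₄ x w₂ w₅`. -/
def dualFS (x : ℕ) (w : List ℕ) : List ℕ :=
  if x ∈ w then fsW1 x w ++ fsW4 x w ++ [x] ++ fsW2 x w ++ fsW5 x w else w

/-- The dual Foata–Strehl map `φ_S` for a set `S`, i.e. the composition of the
(commuting) maps `φ_x` over `x ∈ S`. -/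
noncomputable def dualFSFinset (S : Finset ℕ) (w : List ℕ) : List ℕ :=
  S.toList.foldr dualFS w

/-- The largest letter of a word, with `wmax [] = 0`. -/
def wmax (w : List ℕ) : ℕ := w.foldr max 0

/-- The subword of `w` consisting of the letters lying in `A`. -/
def restrictTo (w : List ℕ) (A : Finset ℕ) : List ℕ :=
  w.filter fun a => decide (a ∈ A)

/-- `N_{PV}(k) = |V_k| - |P_k|` (natural subtraction). -/
def nPV (P V : Finset ℕ) (k : ℕ) : ℕ :=
  (V.filter fun v => v < k).card - (P.filter fun p => p < k).card

/-- `N_{PV}(k) = |V_k| - |P_k|` as an integer. -/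
def nPVZ (P V : Finset ℕ) (k : ℕ) : ℤ :=
  ((V.filter fun v => v < k).card : ℤ) - ((P.filter fun p => p < k).card : ℤ)

/-- `(P, V)` is admissible: some permutation of `[n]` has pinnacle set `P` and
vale set `V`. -/
def AdmissiblePair (n : ℕ) (P V : Finset ℕ) : Prop :=
  ∃ w : List ℕ, IsPermOf n w ∧ pinnSet w = P ∧ valeSet w = V

open Classical in
/-- `𝒱(P)`: the collection of all vale sets `V` for which `(P, V)` is admissible. -/
noncomputable def valeSetsOf (n : ℕ) (P : Finset ℕ) : Finset (Finset ℕ) :=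
  ((Finset.Icc 1 n).powerset).filter fun V => AdmissiblePair n P V

/-- `w` is FS-minimal: it has no double descents (with the `∞` boundary convention),
and for each pinnacle `p`, the `p`-factorization of the restriction of `w` to its
pinnacles and vales satisfies `max w₂ < max w₄`. -/
def FSMinimal (w : List ℕ) : Prop :=
  (∀ i ∈ Finset.Icc 1 w.length,
      ¬(ext w i < ext w (i - 1) ∧ ext w (i + 1) < ext w i)) ∧
  ∀ p ∈ pinnSet w,
    wmax (fsW2 p (restrictTo w (pinnSet w ∪ valeSet w))) <
      wmax (fsW4 p (restrictTo w (pinnSet w ∪ valeSet w)))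

/-- A `PV`-arrangement: a word listing each element of `P ∪ V` exactly once,
with pinnacle set `P` and vale set `V`. -/
def IsPVArrangement (P V : Finset ℕ) (α : List ℕ) : Prop :=
  α.Nodup ∧ α.toFinset = P ∪ V ∧ pinnSet α = P ∧ valeSet α = V

/-- A word is canonical (for pinnacle set `P`) if for each `p ∈ P` its
`p`-factorization satisfies `max w₂ < max w₄`. -/
def IsCanonical (P : Finset ℕ) (α : List ℕ) : Prop :=
  ∀ p ∈ P, wmax (fsW2 p α) < wmax (fsW4 p α)

/-- The number of descents of `w`: indices `j ∈ [n-1]` with `π_j > π_{j+1}`. -/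
def descentCount (w : List ℕ) : ℕ :=
  ((Finset.Icc 1 (w.length - 1)).filter fun j => w.getD j 0 < w.getD (j - 1) 0).card

/-- The original Foata–Strehl map `φ'_x`, defined like `φ_x` but with the words
`w₂, w₄` consisting of letters GREATER than `x`. -/
def origFS (x : ℕ) (w : List ℕ) : List ℕ :=
  if x ∈ w then
    ((w.take (w.idxOf x)).reverse.dropWhile fun a => decide (x < a)).reverse
      ++ ((w.drop (w.idxOf x + 1)).takeWhile fun a => decide (x < a)) ++ [x]
      ++ ((w.take (w.idxOf x)).reverse.takeWhile fun a => decide (x < a)).reverse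
      ++ ((w.drop (w.idxOf x + 1)).dropWhile fun a => decide (x < a))
  else w

/-- `C(l)`: weak compositions `(t₁, …, t_l)` of `l` with `t₁ + ⋯ + t_k ≥ k` for all `k`. -/
def weakComps (l : ℕ) : Finset (Fin l → ℕ) :=
  (Fintype.piFinset fun _ : Fin l => Finset.range (l + 1)).filter fun t =>
    (∑ i, t i) = l ∧ ∀ k : Fin l, (k : ℕ) + 1 ≤ ∑ i ∈ Finset.univ.filter (fun j => j ≤ k), t i

/-- `g_{i+1} = |G_{i+1}|`, the size of the `(i+1)`-st gap set
`G_{i+1} = {j ∈ [n] \ P : p_i < j < p_{i+1}}` (0-indexed `i`, with `p₀ = 1`). -/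
def gapCard (n : ℕ) (P : Finset ℕ) (i : ℕ) : ℕ :=
  (((Finset.Icc 1 n) \ P).filter fun j =>
      (if i = 0 then 1 else (P.sort (· ≤ ·)).getD (i - 1) 0) < j ∧
        j < (P.sort (· ≤ ·)).getD i 0).card

/-!
Split a word with distinct letters at its largest letter, `π = a M b`. A map `φ_x` with `x < M`
only sees the side of `M` containing `x` and acts there as on `a` or `b` alone, while `φ_M`
exchanges the two sides. Hence the orbit of `a M b` consists of the words `u M v` and `v M u`
with `u ∈ Orb(a)` and `v ∈ Orb(b)`, all distinct unless `π = M`; and the vales of `a M b` are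
those of `a` and of `b`, since `M` is a vale only of the one-letter word. Therefore
`|Orb(a M b)| = 2 |Orb(a)| |Orb(b)|`, and induction gives `|Orb(π)| · 2^v(π) = 2^n`.
The same decomposition shows that `φ_S` does not depend on the order in which `S` is listed.
-/

open List

section Factorization

variable {x : ℕ} {w w₁ w₂ w₄ w₅ : List ℕ}

theorem takeWhile_lt_eq_nil_iff {l : List ℕ} :
    l.takeWhile (fun a => decide (a < x)) = [] ↔ ∀ y ∈ l.head?, x ≤ y := by
  cases l <;> simp [takeWhile_cons]

theorem dropWhile_lt_eq_self {l : List ℕ} (h : ∀ y ∈ l.head?, x ≤ y) :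
    l.dropWhile (fun a => decide (a < x)) = l := by
  cases l with
  | nil => rfl
  | cons a l => exact dropWhile_cons_of_neg (by simpa using h a rfl)

theorem fsW1_append_fsW2 (x : ℕ) (w : List ℕ) : fsW1 x w ++ fsW2 x w = w.take (w.idxOf x) := by
  rw [fsW1, fsW2, ← reverse_append, takeWhile_append_dropWhile, reverse_reverse]

theorem fsW4_append_fsW5 (x : ℕ) (w : List ℕ) :
    fsW4 x w ++ fsW5 x w = w.drop (w.idxOf x + 1) :=
  takeWhile_append_dropWhile

theorem eq_fsW_factorization (hx : x ∈ w) :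
    w = fsW1 x w ++ fsW2 x w ++ x :: (fsW4 x w ++ fsW5 x w) := by
  have hi : w.idxOf x < w.length := idxOf_lt_length_iff.2 hx
  rw [fsW1_append_fsW2, fsW4_append_fsW5]
  conv_lhs => rw [← take_append_drop (w.idxOf x) w, drop_eq_getElem_cons hi, getElem_idxOf hi]

theorem notMem_fsW1 : x ∉ fsW1 x w := fun h => by
  have hx : x ∈ w.take (w.idxOf x) := fsW1_append_fsW2 x w ▸ mem_append_left _ h
  exact lt_irrefl _ ((mem_take_iff_idxOf_lt (take_subset _ _ hx)).1 hx)

theorem lt_of_mem_fsW2 {y : ℕ} (hy : y ∈ fsW2 x w) : y < x := by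
  rw [fsW2, mem_reverse] at hy
  simpa using mem_takeWhile_imp hy

theorem lt_of_mem_fsW4 {y : ℕ} (hy : y ∈ fsW4 x w) : y < x := by
  simpa using mem_takeWhile_imp hy

theorem le_of_mem_getLast?_fsW1 {y : ℕ} (hy : y ∈ (fsW1 x w).getLast?) : x ≤ y := by
  rw [fsW1, getLast?_reverse] at hy
  have hnot := head?_dropWhile_not (fun a => decide (a < x)) (w.take (w.idxOf x)).reverse
  rw [Option.mem_def.1 hy] at hnot
  simpa using hnot

theorem le_of_mem_head?_fsW5 {y : ℕ} (hy : y ∈ (fsW5 x w).head?) : x ≤ y := by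
  have hnot := head?_dropWhile_not (fun a => decide (a < x)) (w.drop (w.idxOf x + 1))
  rw [← fsW5, Option.mem_def.1 hy] at hnot
  simpa using hnot

/-- The paper's `x`-factorization `w = w₁ w₂ x w₄ w₅`, with the maximality of the runs `w₂, w₄`
expressed through their neighbouring letters. -/
structure IsFactorization (x : ℕ) (w w₁ w₂ w₄ w₅ : List ℕ) : Prop where
  eq : w = w₁ ++ w₂ ++ x :: (w₄ ++ w₅)
  notMem_left : x ∉ w₁
  le_getLast_left : ∀ y ∈ w₁.getLast?, x ≤ y
  lt_of_mem_left : ∀ y ∈ w₂, y < x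
  lt_of_mem_right : ∀ y ∈ w₄, y < x
  le_head_right : ∀ y ∈ w₅.head?, x ≤ y

theorem isFactorization_fsW (hx : x ∈ w) :
    IsFactorization x w (fsW1 x w) (fsW2 x w) (fsW4 x w) (fsW5 x w) :=
  ⟨eq_fsW_factorization hx, notMem_fsW1, fun _ => le_of_mem_getLast?_fsW1,
    fun _ => lt_of_mem_fsW2, fun _ => lt_of_mem_fsW4, fun _ => le_of_mem_head?_fsW5⟩

namespace IsFactorization

theorem fsW_eq (h : IsFactorization x w w₁ w₂ w₄ w₅) :
    fsW1 x w = w₁ ∧ fsW2 x w = w₂ ∧ fsW4 x w = w₄ ∧ fsW5 x w = w₅ := by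
  have hx₂ : x ∉ w₂ := fun hx => lt_irrefl x (h.lt_of_mem_left x hx)
  have hidx : w.idxOf x = w₁.length + w₂.length := by
    rw [h.eq, append_assoc, idxOf_append_of_notMem h.notMem_left, idxOf_append_of_notMem hx₂,
      idxOf_cons_self, Nat.add_zero]
  have htake : w.take (w.idxOf x) = w₁ ++ w₂ := by
    rw [hidx, h.eq, take_left' (by simp)]
  have hdrop : w.drop (w.idxOf x + 1) = w₄ ++ w₅ := by
    rw [hidx, h.eq, ← singleton_append, ← append_assoc, drop_left' (by simp; omega)]
  have hp₂ : ∀ y ∈ w₂.reverse, decide (y < x) = true := fun y hy => by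
    simpa using h.lt_of_mem_left y (mem_reverse.1 hy)
  have hp₄ : ∀ y ∈ w₄, decide (y < x) = true := fun y hy => by
    simpa using h.lt_of_mem_right y hy
  have hhead₁ : ∀ y ∈ w₁.reverse.head?, x ≤ y := by
    rw [head?_reverse]; exact h.le_getLast_left
  refine ⟨?_, ?_, ?_, ?_⟩
  · rw [fsW1, htake, reverse_append, dropWhile_append_of_pos hp₂, dropWhile_lt_eq_self hhead₁,
      reverse_reverse]
  · rw [fsW2, htake, reverse_append, takeWhile_append_of_pos hp₂,
      takeWhile_lt_eq_nil_iff.2 hhead₁, append_nil, reverse_reverse]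
  · rw [fsW4, hdrop, takeWhile_append_of_pos hp₄, takeWhile_lt_eq_nil_iff.2 h.le_head_right,
      append_nil]
  · rw [fsW5, hdrop, dropWhile_append_of_pos hp₄, dropWhile_lt_eq_self h.le_head_right]

theorem dualFS_eq (h : IsFactorization x w w₁ w₂ w₄ w₅) :
    dualFS x w = w₁ ++ w₄ ++ x :: (w₂ ++ w₅) := by
  obtain ⟨e₁, e₂, e₄, e₅⟩ := h.fsW_eq
  rw [dualFS, if_pos (by simp [h.eq]), e₁, e₂, e₄, e₅]
  simp

variable {M : ℕ} {a b : List ℕ}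

theorem append_cons_left (h : IsFactorization x a w₁ w₂ w₄ w₅) (hxM : x < M) :
    IsFactorization x (a ++ M :: b) w₁ w₂ w₄ (w₅ ++ M :: b) where
  eq := by simp [h.eq]
  notMem_left := h.notMem_left
  le_getLast_left := h.le_getLast_left
  lt_of_mem_left := h.lt_of_mem_left
  lt_of_mem_right := h.lt_of_mem_right
  le_head_right := by
    cases w₅ with
    | nil => simpa using hxM.le
    | cons y w₅ => simpa using h.le_head_right y rfl

theorem cons_append_right (h : IsFactorization x b w₁ w₂ w₄ w₅) (hxa : x ∉ a) (hxM : x < M) :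
    IsFactorization x (a ++ M :: b) (a ++ M :: w₁) w₂ w₄ w₅ where
  eq := by simp [h.eq]
  notMem_left := by simp [hxa, hxM.ne, h.notMem_left]
  le_getLast_left := by
    rcases eq_nil_or_concat w₁ with rfl | ⟨l, y, rfl⟩
    · simpa using hxM.le
    · intro z hz
      rw [concat_eq_append, ← cons_append, ← append_assoc, getLast?_concat] at hz
      obtain rfl : y = z := by simpa using hz
      exact h.le_getLast_left y (by simp)
  lt_of_mem_left := h.lt_of_mem_left
  lt_of_mem_right := h.lt_of_mem_right
  le_head_right := h.le_head_right

theorem of_max (ha : ∀ y ∈ a, y < M) (hb : ∀ y ∈ b, y < M) :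
    IsFactorization M (a ++ M :: b) [] a b [] :=
  ⟨by simp, by simp, by simp, ha, hb, by simp⟩

end IsFactorization

end Factorization

section Vales

variable {x : ℕ} {w : List ℕ}

theorem ext_zero (w : List ℕ) : ext w 0 = ⊤ := if_neg (by omega)

theorem ext_succ_of_lt {i : ℕ} (hi : i < w.length) : ext w (i + 1) = w[i] := by
  rw [ext, if_pos (by omega), Nat.add_sub_cancel, getD_eq_getElem?_getD, getElem?_eq_getElem hi]
  rfl

theorem coe_lt_ext_succ_iff {i : ℕ} : (x : ℕ∞) < ext w (i + 1) ↔ ∀ y ∈ w[i]?, x < y := by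
  by_cases hi : i < w.length
  · simp [ext_succ_of_lt hi, getElem?_eq_getElem hi]
  · simp [ext, hi]

-- `ext` is 1-indexed: the letter `x` sits at position `w.idxOf x + 1`.
theorem fsW2_eq_nil_iff : fsW2 x w = [] ↔ (x : ℕ∞) < ext w (w.idxOf x) := by
  rw [fsW2, reverse_eq_nil_iff, takeWhile_lt_eq_nil_iff, head?_reverse, getLast?_take]
  rcases h : w.idxOf x with _ | k
  · simp [ext_zero]
  · have hk : k < w.length := by have := idxOf_le_length (a := x) (l := w); omega
    have hne : w[k] ≠ x := fun hkx => by
      have hmem : x ∈ w.take (k + 1) := by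
        rw [mem_take_iff_getElem]; exact ⟨k, by simp [hk], hkx⟩
      have := (mem_take_iff_idxOf_lt (hkx ▸ getElem_mem hk)).1 hmem
      omega
    simp only [coe_lt_ext_succ_iff, Nat.add_one_ne_zero, if_false, Nat.add_sub_cancel,
      getElem?_eq_getElem hk, Option.some_or, Option.mem_def, Option.some.injEq, forall_eq']
    exact ⟨fun hle => lt_of_le_of_ne hle hne.symm, le_of_lt⟩

theorem fsW4_eq_nil_iff (hw : w.Nodup) (hx : x ∈ w) :
    fsW4 x w = [] ↔ (x : ℕ∞) < ext w (w.idxOf x + 1 + 1) := by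
  rw [fsW4, takeWhile_lt_eq_nil_iff, head?_drop, coe_lt_ext_succ_iff]
  refine forall₂_congr fun y hy => ⟨fun hle => lt_of_le_of_ne hle ?_, le_of_lt⟩
  rintro rfl
  obtain ⟨_, hy⟩ := List.getElem?_eq_some_iff.1 hy
  have := (hw.getElem_inj_iff).1 (hy.trans (getElem_idxOf (idxOf_lt_length_iff.2 hx)).symm)
  omega

theorem mem_valeSet_iff (hw : w.Nodup) :
    x ∈ valeSet w ↔ x ∈ w ∧ fsW2 x w = [] ∧ fsW4 x w = [] := by
  simp only [valeSet, Finset.mem_image, Finset.mem_filter, Finset.mem_Icc]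
  constructor
  · rintro ⟨i, ⟨⟨hi1, hi2⟩, hl, hr⟩, rfl⟩
    obtain ⟨k, rfl⟩ : ∃ k, i = k + 1 := ⟨i - 1, by omega⟩
    have hk : k < w.length := by omega
    simp only [Nat.add_sub_cancel, getD_eq_getElem?_getD, getElem?_eq_getElem hk,
      Option.getD_some, ext_succ_of_lt hk] at hl hr ⊢
    have hidx := hw.idxOf_getElem k hk
    exact ⟨getElem_mem hk, fsW2_eq_nil_iff.2 (by rwa [hidx]),
      (fsW4_eq_nil_iff hw (getElem_mem hk)).2 (by rwa [hidx])⟩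
  · rintro ⟨hx, h2, h4⟩
    have hk := idxOf_lt_length_iff.2 hx
    refine ⟨w.idxOf x + 1, ⟨⟨by omega, hk⟩, ?_, ?_⟩, ?_⟩
    · rw [ext_succ_of_lt hk, getElem_idxOf hk, Nat.add_sub_cancel]
      exact fsW2_eq_nil_iff.1 h2
    · rw [ext_succ_of_lt hk, getElem_idxOf hk]
      exact (fsW4_eq_nil_iff hw hx).1 h4
    · simp [getD_eq_getElem?_getD, getElem?_eq_getElem hk, getElem_idxOf hk]

end Vales

section Glue

variable {x M : ℕ} {a b u v : List ℕ}

theorem dualFS_perm (x : ℕ) (w : List ℕ) : dualFS x w ~ w := by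
  by_cases hx : x ∈ w
  · have h := isFactorization_fsW hx
    conv_rhs => rw [h.eq]
    rw [h.dualFS_eq, perm_iff_count]
    intro y
    simp only [count_append, count_cons]
    omega
  · rw [dualFS, if_neg hx]

theorem dualFS_of_notMem {w : List ℕ} (hx : x ∉ w) : dualFS x w = w := if_neg hx

theorem dualFS_append_cons_of_mem_left (hx : x ∈ a) (hxM : x < M) :
    dualFS x (a ++ M :: b) = dualFS x a ++ M :: b := by
  have h := isFactorization_fsW hx
  rw [(h.append_cons_left hxM).dualFS_eq, h.dualFS_eq]
  simp

theorem dualFS_append_cons_of_mem_right (hx : x ∈ b) (hxa : x ∉ a) (hxM : x < M) :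
    dualFS x (a ++ M :: b) = a ++ M :: dualFS x b := by
  have h := isFactorization_fsW hx
  rw [(h.cons_append_right hxa hxM).dualFS_eq, h.dualFS_eq]
  simp

theorem dualFS_append_cons_max (ha : ∀ y ∈ a, y < M) (hb : ∀ y ∈ b, y < M) :
    dualFS M (a ++ M :: b) = b ++ M :: a := by
  rw [(IsFactorization.of_max ha hb).dualFS_eq]
  simp

/-- The flag records whether `φ_M` has been applied an odd number of times. -/
def glue (M : ℕ) (s : Bool) (u v : List ℕ) : List ℕ :=
  if s then v ++ M :: u else u ++ M :: v

theorem mem_glue {s : Bool} : x ∈ glue M s u v ↔ x ∈ u ∨ x = M ∨ x ∈ v := by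
  cases s
  · simp [glue]
  · simp [glue]
    tauto

theorem dualFS_glue_of_mem_left {s : Bool} (hx : x ∈ u) (hxv : x ∉ v) (hxM : x < M) :
    dualFS x (glue M s u v) = glue M s (dualFS x u) v := by
  cases s
  · exact dualFS_append_cons_of_mem_left hx hxM
  · exact dualFS_append_cons_of_mem_right hx hxv hxM

theorem dualFS_glue_of_mem_right {s : Bool} (hx : x ∈ v) (hxu : x ∉ u) (hxM : x < M) :
    dualFS x (glue M s u v) = glue M s u (dualFS x v) := by
  cases s
  · exact dualFS_append_cons_of_mem_right hx hxu hxM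
  · exact dualFS_append_cons_of_mem_left hx hxM

theorem dualFS_glue_self {s : Bool} (hu : ∀ y ∈ u, y < M) (hv : ∀ y ∈ v, y < M) :
    dualFS M (glue M s u v) = glue M (!s) u v := by
  cases s
  · exact dualFS_append_cons_max hu hv
  · exact dualFS_append_cons_max hv hu

theorem foldr_dualFS_perm (L w : List ℕ) : L.foldr dualFS w ~ w := by
  induction L with
  | nil => rfl
  | cons x L ih => exact (dualFS_perm x _).trans ih

theorem foldr_dualFS_filter (L w : List ℕ) :
    (L.filter (· ∈ w)).foldr dualFS w = L.foldr dualFS w := by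
  induction L with
  | nil => rfl
  | cons x L ih =>
    by_cases hx : x ∈ w
    · simp [hx, ih]
    · rw [filter_cons, if_neg (by simpa using hx), ih, foldr_cons,
        dualFS_of_notMem fun h => hx ((foldr_dualFS_perm L w).subset h)]

theorem foldr_dualFS_glue {s : Bool} {L : List ℕ} (ha : ∀ y ∈ a, y < M) (hb : ∀ y ∈ b, y < M)
    (hab : a.Disjoint b) (hL : L.Nodup) :
    L.foldr dualFS (glue M s a b) = glue M (s ^^ decide (M ∈ L))
      ((L.filter (· ∈ a)).foldr dualFS a) ((L.filter (· ∈ b)).foldr dualFS b) := by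
  induction L with
  | nil => simp
  | cons x L ih =>
    obtain ⟨hxL, hL⟩ := nodup_cons.1 hL
    have hu := foldr_dualFS_perm (L.filter (· ∈ a)) a
    have hv := foldr_dualFS_perm (L.filter (· ∈ b)) b
    rw [foldr_cons, ih hL]
    by_cases hxa : x ∈ a
    · have hxb : x ∉ b := disjoint_left.1 hab hxa
      have hxM : x ≠ M := (ha x hxa).ne
      simp only [filter_cons, hxa, hxb, decide_true, decide_false, if_true, foldr_cons,
        mem_cons, hxM.symm, false_or]
      exact dualFS_glue_of_mem_left (hu.mem_iff.2 hxa) (fun h => hxb (hv.subset h)) (ha x hxa)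
    by_cases hxb : x ∈ b
    · have hxM : x ≠ M := (hb x hxb).ne
      simp only [filter_cons, hxa, hxb, decide_true, decide_false, if_true, foldr_cons,
        mem_cons, hxM.symm, false_or]
      exact dualFS_glue_of_mem_right (hv.mem_iff.2 hxb) (fun h => hxa (hu.subset h)) (hb x hxb)
    simp only [filter_cons, hxa, hxb, decide_false]
    by_cases hxM : x = M
    · subst hxM
      rw [dualFS_glue_self (fun y hy => ha y (hu.subset hy)) (fun y hy => hb y (hv.subset hy))]
      simp [hxL]
    · rw [dualFS_of_notMem]
      · simp [Ne.symm hxM]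
      · simp only [mem_glue, not_or]
        exact ⟨fun h => hxa (hu.subset h), hxM, fun h => hxb (hv.subset h)⟩

end Glue

section Orbit

variable {M : ℕ} {a b w : List ℕ}

theorem exists_eq_append_cons_max (hw : w.Nodup) (hne : w ≠ []) :
    ∃ M a b, w = a ++ M :: b ∧ (∀ y ∈ a, y < M) ∧ ∀ y ∈ b, y < M := by
  have hle : ∀ y ∈ w, y ≤ w.max hne := fun _ => le_max_of_mem
  have hmem := max_mem hne
  generalize w.max hne = M at hle hmem
  obtain ⟨a, b, rfl⟩ := append_of_mem hmem
  have hM : M ∉ a ++ b := (nodup_cons.1 (nodup_middle.1 hw)).1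
  refine ⟨M, a, b, rfl, fun y hy => ?_, fun y hy => ?_⟩ <;>
    refine lt_of_le_of_ne (hle y (by simp [hy])) fun h => hM ?_ <;> simp [← h, hy]

theorem foldr_dualFS_eq_of_perm {L₁ L₂ : List ℕ} (hw : w.Nodup) (hL : L₁.Nodup) (h : L₁ ~ L₂) :
    L₁.foldr dualFS w = L₂.foldr dualFS w := by
  induction hn : w.length using Nat.strong_induction_on generalizing w L₁ L₂ with
  | _ n ih =>
  rcases eq_or_ne w [] with rfl | hne
  · rw [(foldr_dualFS_perm L₁ []).eq_nil, (foldr_dualFS_perm L₂ []).eq_nil]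
  obtain ⟨M, a, b, rfl, ha, hb⟩ := exists_eq_append_cons_max hw hne
  obtain ⟨hna, hnb, hab⟩ := nodup_append'.1 (nodup_middle.1 hw).of_cons
  have hlen : a.length + b.length < n := by simp at hn; omega
  change L₁.foldr dualFS (glue M false a b) = L₂.foldr dualFS (glue M false a b)
  rw [foldr_dualFS_glue ha hb hab hL, foldr_dualFS_glue ha hb hab (h.nodup_iff.1 hL),
    ih _ (by omega) hna (hL.filter _) (h.filter _) rfl,
    ih _ (by omega) hnb (hL.filter _) (h.filter _) rfl]
  simp only [h.mem_iff]

def orbit (w : List ℕ) : Set (List ℕ) := Set.range fun S : Finset ℕ => dualFSFinset S w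

theorem foldr_dualFS_mem_orbit {L : List ℕ} (hw : w.Nodup) (hL : L.Nodup) :
    L.foldr dualFS w ∈ orbit w :=
  ⟨L.toFinset, foldr_dualFS_eq_of_perm hw (Finset.nodup_toList _) (toFinset_toList hL)⟩

theorem orbit_eq_singleton_of_length_le_one (hw : w.length ≤ 1) : orbit w = {w} := by
  ext w'
  constructor
  · rintro ⟨S, rfl⟩
    have h := foldr_dualFS_perm S.toList w
    match w, hw with
    | [], _ => exact h.eq_nil
    | [_], _ => exact perm_singleton.1 h
  · rintro rfl
    exact ⟨∅, by simp [dualFSFinset]⟩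

theorem glue_mem_orbit {s : Bool} (hw : (a ++ M :: b).Nodup) (ha : ∀ y ∈ a, y < M)
    (hb : ∀ y ∈ b, y < M) (Sa Sb : Finset ℕ) :
    glue M s (dualFSFinset Sa a) (dualFSFinset Sb b) ∈ orbit (a ++ M :: b) := by
  obtain ⟨-, -, hab⟩ := nodup_append'.1 (nodup_middle.1 hw).of_cons
  have hMa : M ∉ a := fun h => lt_irrefl M (ha M h)
  have hMb : M ∉ b := fun h => lt_irrefl M (hb M h)
  set L := (if s then [M] else []) ++ (Sa.toList.filter (· ∈ a) ++ Sb.toList.filter (· ∈ b))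
  have hLa : L.filter (· ∈ a) = Sa.toList.filter (· ∈ a) := by
    have hba : ∀ y ∈ Sb, y ∈ a → y ∉ b := fun _ _ hya => disjoint_left.1 hab hya
    cases s <;> simpa [L, filter_append, filter_filter, hMa, filter_eq_nil_iff] using hba
  have hLb : L.filter (· ∈ b) = Sb.toList.filter (· ∈ b) := by
    have hab' : ∀ y ∈ Sa, y ∈ b → y ∉ a := fun _ _ hyb hya => disjoint_left.1 hab hya hyb
    cases s <;> simpa [L, filter_append, filter_filter, hMb, filter_eq_nil_iff] using hab'
  have hML : decide (M ∈ L) = s := by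
    cases s <;> simp [L, hMa, hMb]
  have hL : L.Nodup := by
    have hab' : ∀ y ∈ Sa, y ∈ a → ∀ z ∈ Sb, z ∈ b → y ≠ z :=
      fun _ _ hya _ _ hzb hyz => disjoint_left.1 hab hya (hyz ▸ hzb)
    cases s <;> simpa [L, nodup_append, Sa.nodup_toList.filter, Sb.nodup_toList.filter, hMa, hMb]
      using hab'
  have key : L.foldr dualFS (glue M false a b) =
      glue M s (dualFSFinset Sa a) (dualFSFinset Sb b) := by
    rw [foldr_dualFS_glue ha hb hab hL, hLa, hLb, foldr_dualFS_filter, foldr_dualFS_filter, hML,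
      Bool.false_xor]
    rfl
  exact key ▸ foldr_dualFS_mem_orbit hw hL

theorem orbit_append_cons (hw : (a ++ M :: b).Nodup) (ha : ∀ y ∈ a, y < M)
    (hb : ∀ y ∈ b, y < M) :
    orbit (a ++ M :: b) = (fun p : Bool × List ℕ × List ℕ => glue M p.1 p.2.1 p.2.2) ''
      (Set.univ ×ˢ orbit a ×ˢ orbit b) := by
  obtain ⟨hna, hnb, hab⟩ := nodup_append'.1 (nodup_middle.1 hw).of_cons
  ext w'
  constructor
  · rintro ⟨S, rfl⟩
    refine ⟨(decide (M ∈ S.toList), (S.toList.filter (· ∈ a)).foldr dualFS a,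
      (S.toList.filter (· ∈ b)).foldr dualFS b), ⟨trivial,
      foldr_dualFS_mem_orbit hna (S.nodup_toList.filter _),
      foldr_dualFS_mem_orbit hnb (S.nodup_toList.filter _)⟩, ?_⟩
    change _ = S.toList.foldr dualFS (glue M false a b)
    rw [foldr_dualFS_glue ha hb hab S.nodup_toList, Bool.false_xor]
  · rintro ⟨⟨s, _, _⟩, ⟨-, ⟨Sa, rfl⟩, ⟨Sb, rfl⟩⟩, rfl⟩
    exact glue_mem_orbit hw ha hb Sa Sb

end Orbit

section Count

variable {x M : ℕ} {a b w : List ℕ}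

theorem perm_of_mem_orbit {w' : List ℕ} (h : w' ∈ orbit w) : w' ~ w := by
  obtain ⟨S, rfl⟩ := h
  exact foldr_dualFS_perm _ _

theorem injOn_glue (hMa : M ∉ a) (hMb : M ∉ b) (hab : a.Disjoint b) (hne : a ≠ [] ∨ b ≠ []) :
    Set.InjOn (fun p : Bool × List ℕ × List ℕ => glue M p.1 p.2.1 p.2.2)
      (Set.univ ×ˢ orbit a ×ˢ orbit b) := by
  have hnab : ¬ a ~ b := fun h => by
    rcases hne with hne | hne <;> refine hne (eq_nil_iff_forall_not_mem.2 fun y hy => ?_)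
    · exact disjoint_left.1 hab hy (h.subset hy)
    · exact disjoint_left.1 hab (h.symm.subset hy) hy
  rintro ⟨s, u, v⟩ ⟨-, hu, hv⟩ ⟨s', u', v'⟩ ⟨-, hu', hv'⟩ h
  replace hu := perm_of_mem_orbit hu
  replace hv := perm_of_mem_orbit hv
  replace hu' := perm_of_mem_orbit hu'
  replace hv' := perm_of_mem_orbit hv'
  have hMu : M ∉ u := fun h => hMa (hu.subset h)
  have hMv : M ∉ v := fun h => hMb (hv.subset h)
  cases s <;> cases s' <;> simp only [glue, Bool.false_eq_true, if_true, if_false] at h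
  · obtain ⟨rfl, -, rfl⟩ := (append_cons_inj_of_notMem hMu hMv).1 h
    rfl
  · obtain ⟨rfl, -, -⟩ := (append_cons_inj_of_notMem hMu hMv).1 h
    exact absurd (hu.symm.trans hv') hnab
  · obtain ⟨rfl, -, -⟩ := (append_cons_inj_of_notMem hMv hMu).1 h
    exact absurd (hu'.symm.trans hv) hnab
  · obtain ⟨rfl, -, rfl⟩ := (append_cons_inj_of_notMem hMv hMu).1 h
    rfl

theorem ncard_orbit_append_cons (hw : (a ++ M :: b).Nodup) (ha : ∀ y ∈ a, y < M)
    (hb : ∀ y ∈ b, y < M) (hne : a ≠ [] ∨ b ≠ []) :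
    (orbit (a ++ M :: b)).ncard = 2 * (orbit a).ncard * (orbit b).ncard := by
  have hab := (nodup_append'.1 (nodup_middle.1 hw).of_cons).2.2
  have hinj := injOn_glue (fun h => lt_irrefl M (ha M h)) (fun h => lt_irrefl M (hb M h)) hab hne
  rw [orbit_append_cons hw ha hb, hinj.ncard_image,
    Set.ncard_prod, Set.ncard_prod, Set.ncard_univ, Nat.card_eq_fintype_card, Fintype.card_bool,
    mul_assoc]

theorem mem_of_mem_valeSet (hw : w.Nodup) (hx : x ∈ valeSet w) : x ∈ w :=
  ((mem_valeSet_iff hw).1 hx).1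

theorem card_valeSet_le_length (hw : w.Nodup) : (valeSet w).card ≤ w.length :=
  (Finset.card_le_card fun _ hx => mem_toFinset.2 (mem_of_mem_valeSet hw hx)).trans
    (toFinset_card_le w)

theorem valeSet_nil : valeSet [] = ∅ := by
  simp [valeSet]

theorem valeSet_singleton (M : ℕ) : valeSet [M] = {M} := by
  obtain ⟨-, h₂, h₄, -⟩ := (IsFactorization.of_max (M := M) (a := []) (b := []) (by simp)
    (by simp)).fsW_eq
  ext x
  rw [mem_valeSet_iff (nodup_singleton M)]
  simp_all

theorem valeSet_append_cons (hw : (a ++ M :: b).Nodup) (ha : ∀ y ∈ a, y < M)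
    (hb : ∀ y ∈ b, y < M) (hne : a ≠ [] ∨ b ≠ []) :
    valeSet (a ++ M :: b) = valeSet a ∪ valeSet b := by
  obtain ⟨hna, hnb, hab⟩ := nodup_append'.1 (nodup_middle.1 hw).of_cons
  ext x
  rw [Finset.mem_union, mem_valeSet_iff hw, mem_valeSet_iff hna, mem_valeSet_iff hnb]
  by_cases hxa : x ∈ a
  · obtain ⟨-, h₂, h₄, -⟩ := ((isFactorization_fsW hxa).append_cons_left (b := b) (ha x hxa)).fsW_eq
    simp [hxa, h₂, h₄, disjoint_left.1 hab hxa]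
  by_cases hxb : x ∈ b
  · obtain ⟨-, h₂, h₄, -⟩ := ((isFactorization_fsW hxb).cons_append_right hxa (hb x hxb)).fsW_eq
    simp [hxa, hxb, h₂, h₄]
  by_cases hxM : x = M
  · subst hxM
    obtain ⟨-, h₂, h₄, -⟩ := (IsFactorization.of_max ha hb).fsW_eq
    simp [hxa, hxb, h₂, h₄]
    tauto
  · simp [hxa, hxb, hxM]

theorem ncard_orbit_mul_two_pow (hw : w.Nodup) :
    (orbit w).ncard * 2 ^ (valeSet w).card = 2 ^ w.length := by
  induction hn : w.length using Nat.strong_induction_on generalizing w with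
  | _ n ih =>
  subst hn
  rcases eq_or_ne w [] with rfl | hne
  · simp [orbit_eq_singleton_of_length_le_one, valeSet_nil]
  obtain ⟨M, a, b, rfl, ha, hb⟩ := exists_eq_append_cons_max hw hne
  by_cases hab₀ : a = [] ∧ b = []
  · obtain ⟨rfl, rfl⟩ := hab₀
    simp [orbit_eq_singleton_of_length_le_one, valeSet_singleton]
  replace hab₀ : a ≠ [] ∨ b ≠ [] := by tauto
  obtain ⟨hna, hnb, hab⟩ := nodup_append'.1 (nodup_middle.1 hw).of_cons
  have hvale : Disjoint (valeSet a) (valeSet b) := Finset.disjoint_left.2 fun x hxa hxb =>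
    disjoint_left.1 hab (mem_of_mem_valeSet hna hxa) (mem_of_mem_valeSet hnb hxb)
  have iha := ih a.length (by simp) hna rfl
  have ihb := ih b.length (by simp; omega) hnb rfl
  rw [ncard_orbit_append_cons hw ha hb hab₀, valeSet_append_cons hw ha hb hab₀,
    Finset.card_union_of_disjoint hvale]
  calc 2 * (orbit a).ncard * (orbit b).ncard * 2 ^ ((valeSet a).card + (valeSet b).card)
      = 2 * ((orbit a).ncard * 2 ^ (valeSet a).card) *
          ((orbit b).ncard * 2 ^ (valeSet b).card) := by ring
    _ = 2 ^ (a ++ M :: b).length := by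
        rw [iha, ihb, length_append, length_cons]
        ring

theorem ncard_orbit (hw : w.Nodup) : (orbit w).ncard = 2 ^ (w.length - (valeSet w).card) :=
  Nat.eq_of_mul_eq_mul_right (by positivity) ((ncard_orbit_mul_two_pow hw).trans
    (Nat.pow_sub_mul_pow 2 (card_valeSet_le_length hw)).symm)

theorem dualFSFinset_filter_mem (hw : w.Nodup) (S : Finset ℕ) :
    dualFSFinset (S.filter (· ∈ w)) w = dualFSFinset S w := by
  rw [dualFSFinset, dualFSFinset, ← foldr_dualFS_filter S.toList w]
  exact foldr_dualFS_eq_of_perm hw (Finset.nodup_toList _)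
    ((perm_ext_iff_of_nodup (Finset.nodup_toList _) (S.nodup_toList.filter _)).2 fun y => by simp)

theorem orbit_eq_of_isPermOf {n : ℕ} {π : List ℕ} (hπ : IsPermOf n π) :
    {w : List ℕ | ∃ S : Finset ℕ, S ⊆ Finset.Icc 1 n ∧ w = dualFSFinset S π} = orbit π := by
  ext w
  constructor
  · rintro ⟨S, -, rfl⟩
    exact ⟨S, rfl⟩
  · rintro ⟨S, rfl⟩
    refine ⟨S.filter (· ∈ π), fun y hy => ?_,
      (dualFSFinset_filter_mem (hπ.nodup_iff.2 nodup_range') S).symm⟩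
    have hy := mem_range'_1.1 (hπ.subset (Finset.mem_filter.1 hy).2)
    exact Finset.mem_Icc.2 ⟨hy.1, by omega⟩

end Count

/-- Theorem 2.6: the orbit of `π ∈ S_n` under the dual Foata–Strehl
action has cardinality `2^(n - v(π))`, where `v(π)` is the number of vales of `π`. -/
theorem card_orbit (n : ℕ) (π : List ℕ) (hπ : IsPermOf n π) :
    {w : List ℕ | ∃ S : Finset ℕ, S ⊆ Finset.Icc 1 n ∧ w = dualFSFinset S π}.ncard =
      2 ^ (n - (valeSet π).card) := by
  rw [orbit_eq_of_isPermOf hπ, ncard_orbit (hπ.nodup_iff.2 List.nodup_range'), hπ.length_eq,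
    List.length_range']
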